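/- The velocity function ψ of the Lax-curve parametrisation is twice continuously differentiable at the base pressure: let γ > 1, ρ_k > 0, p_k > 0, c_k = √(γ p_k/ρ_k) and μ² = (γ−1)/(γ+1), and define ψ : (0, ∞) → ℝ by ψ(σ) = (2c_k/(γ−1))·((σ/p_k)^((γ−1)/(2γ)) − 1) for σ ≤ p_k and ψ(σ) = (σ − p_k)·((1−μ²)/(ρ_k(σ + μ²p_k)))^(1/2) for σ > p_k. Then ψ is ContDiffAt of order 2 at σ = p_k (i.e., twice continuously differentiable at p_k). -/

import Mathlib

/-!
Each branch of `ψ` is smooth near `p_k`: the rarefaction branch is a power of `σ / p_k`, the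
shock branch is `(σ - p_k)` times the square root of a positive rational function. A function
glued at a point from two `Cⁿ` pieces is `Cⁿ` there as soon as the pieces have the same
derivatives of order `≤ n` at that point, so it suffices to match the two branches to second
order at `p_k`. Both vanish there, both have slope `c_k / (γ p_k)`, and both have second
derivative `-(γ + 1) c_k / (2 γ² p_k²)`: the shock curve and the rarefaction curve have
second-order contact.
-/

/-- The velocity function `ψ` of the Lax-curve parametrisation: rarefaction branch
for `σ ≤ p`, shock (Rankine–Hugoniot) branch for `σ > p`, based at density `ρ` and
pressure `p`, with sound speed `c = √(γp/ρ)` and `μ² = (γ−1)/(γ+1)`. -/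
noncomputable def laxPsi (γ ρ p : ℝ) (σ : ℝ) : ℝ :=
  if σ ≤ p then
    (2 * Real.sqrt (γ * p / ρ) / (γ - 1)) * ((σ / p) ^ ((γ - 1) / (2 * γ)) - 1)
  else
    (σ - p) * Real.sqrt ((1 - (γ - 1) / (γ + 1)) / (ρ * (σ + ((γ - 1) / (γ + 1)) * p)))

open Real Set Filter Topology

theorem contDiffAt_succ_of_eventually_hasDerivAt {F : Type*} [NormedAddCommGroup F]
    [NormedSpace ℝ F] {n : ℕ} {f f' : ℝ → F} {a : ℝ}
    (hf : ∀ᶠ x in 𝓝 a, HasDerivAt f (f' x) x) (hf' : ContDiffAt ℝ n f' a) :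
    ContDiffAt ℝ (n + 1) f a :=
  contDiffAt_succ_iff_hasFDerivAt.mpr ⟨fun x => ContinuousLinearMap.toSpanSingleton ℝ (f' x),
    hf.exists_mem.imp fun _ hu => ⟨hu.1, fun x hx => (hu.2 x hx).hasFDerivAt⟩,
    (ContinuousLinearMap.toSpanSingletonCLE (𝕜 := ℝ) (E := F)).contDiff.contDiffAt.comp a hf'⟩

section Glue

variable {β : Type*} {f g : ℝ → β} {a x : ℝ}

theorem ite_le_eventuallyEq_left (hx : x < a) :
    (fun y => if y ≤ a then f y else g y) =ᶠ[𝓝 x] f :=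
  eventually_of_mem (Iio_mem_nhds hx) fun _ hy => if_pos (le_of_lt hy)

theorem ite_le_eventuallyEq_right (hx : a < x) :
    (fun y => if y ≤ a then f y else g y) =ᶠ[𝓝 x] g :=
  eventually_of_mem (Ioi_mem_nhds hx) fun _ hy => if_neg (not_le.mpr hy)

theorem ite_le_eqOn_Ici (hfg : f a = g a) :
    EqOn (fun y => if y ≤ a then f y else g y) g (Ici a) := by
  intro y (hy : a ≤ y)
  dsimp only
  split_ifs with h
  · rw [le_antisymm h hy, hfg]
  · rfl

theorem ContinuousAt.ite_le [TopologicalSpace β] (hf : ContinuousAt f x) (hg : ContinuousAt g x)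
    (hfg : f a = g a) : ContinuousAt (fun y => if y ≤ a then f y else g y) x := by
  rcases lt_trichotomy x a with hx | rfl | hx
  · exact hf.congr (ite_le_eventuallyEq_left hx).symm
  · have hle : ContinuousWithinAt (fun y => if y ≤ x then f y else g y) (Iic x) x :=
      hf.continuousWithinAt.congr (fun y (hy : y ≤ x) => if_pos hy) (if_pos le_rfl)
    have hge := hg.continuousWithinAt (s := Ici x).congr (ite_le_eqOn_Ici hfg)
      (ite_le_eqOn_Ici hfg self_mem_Ici)
    simpa [Iic_union_Ici, continuousWithinAt_univ] using hle.union hge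
  · exact hg.congr (ite_le_eventuallyEq_right hx).symm

variable {F : Type*} [NormedAddCommGroup F] [NormedSpace ℝ F] {f g : ℝ → F}

theorem DifferentiableAt.hasDerivAt_ite_le (hf : DifferentiableAt ℝ f x)
    (hg : DifferentiableAt ℝ g x) (hfg : f a = g a) (hfg' : deriv f a = deriv g a) :
    HasDerivAt (fun y => if y ≤ a then f y else g y)
      (if x ≤ a then deriv f x else deriv g x) x := by
  rcases lt_trichotomy x a with hx | rfl | hx
  · rw [if_pos hx.le]
    exact hf.hasDerivAt.congr_of_eventuallyEq (ite_le_eventuallyEq_left hx)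
  · rw [if_pos le_rfl]
    have hle : HasDerivWithinAt (fun y => if y ≤ x then f y else g y) (deriv f x) (Iic x) x :=
      hf.hasDerivAt.hasDerivWithinAt.congr (fun y (hy : y ≤ x) => if_pos hy) (if_pos le_rfl)
    have hge := (hfg' ▸ hg.hasDerivAt).hasDerivWithinAt (s := Ici x).congr
      (ite_le_eqOn_Ici hfg) (ite_le_eqOn_Ici hfg self_mem_Ici)
    simpa [Iic_union_Ici] using hle.union hge
  · rw [if_neg (not_le.mpr hx)]
    exact hg.hasDerivAt.congr_of_eventuallyEq (ite_le_eventuallyEq_right hx)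

theorem contDiffAt_ite_le_of_iteratedDeriv_eq {n : ℕ} (hf : ContDiffAt ℝ n f a)
    (hg : ContDiffAt ℝ n g a) (hfg : ∀ k ≤ n, iteratedDeriv k f a = iteratedDeriv k g a) :
    ContDiffAt ℝ n (fun x => if x ≤ a then f x else g x) a := by
  induction n generalizing f g with
  | zero =>
    have h0 : f a = g a := by simpa using hfg 0 le_rfl
    exact contDiffAt_zero.mpr ⟨_, (hf.eventually (by simp)).and (hg.eventually (by simp)),
      fun x hx => (hx.1.continuousAt.ite_le hx.2.continuousAt h0).continuousWithinAt⟩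
  | succ n ih =>
    have h0 : f a = g a := by simpa using hfg 0 (by omega)
    have h1 : deriv f a = deriv g a := by simpa using hfg 1 (by omega)
    have hderiv : ContDiffAt ℝ n (fun x => if x ≤ a then deriv f x else deriv g x) a :=
      ih (hf.derivWithin le_rfl) (hg.derivWithin le_rfl) fun k hk => by
        simpa only [← iteratedDeriv_succ'] using hfg (k + 1) (by omega)
    refine contDiffAt_succ_of_eventually_hasDerivAt ?_ hderiv
    filter_upwards [hf.eventually (by simp), hg.eventually (by simp)] with x hfx hgx
    exact (hfx.differentiableAt (by simp)).hasDerivAt_ite_le (hgx.differentiableAt (by simp)) h0 h1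

end Glue

theorem iteratedDeriv_succ_sub_mul {𝕜 : Type*} [NontriviallyNormedField 𝕜] {h : 𝕜 → 𝕜} {a : 𝕜}
    {k : ℕ} (hh : ContDiffAt 𝕜 (k + 1) h a) :
    iteratedDeriv (k + 1) (fun x => (x - a) * h x) a = (k + 1) * iteratedDeriv k h a := by
  have hlin (i : ℕ) : iteratedDeriv i (fun x => x - a) a = if i = 1 then 1 else 0 := by
    simpa [iteratedDeriv_fun_id_zero] using
      congrFun (iteratedDeriv_comp_sub_const i (fun x : 𝕜 => x) a) a
  rw [iteratedDeriv_fun_mul (by fun_prop) hh, Finset.sum_eq_single 1]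
  · simp [hlin]
  · intro i _ hi
    simp [hlin, hi]
  · simp

theorem contDiffAt_div_rpow_self {a : ℝ} (ha : a ≠ 0) (r : ℝ) {n : WithTop ℕ∞} :
    ContDiffAt ℝ n (fun x => (x / a) ^ r) a :=
  (contDiffAt_id.div_const a).rpow_const_of_ne (by simp [ha])

theorem iteratedDeriv_div_rpow_self {a : ℝ} (ha : 0 < a) (r : ℝ) (k : ℕ) :
    iteratedDeriv k (fun x => (x / a) ^ r) a = (descPochhammer ℝ k).eval r / a ^ k := by
  have hev : (fun x => (x / a) ^ r) =ᶠ[𝓝 a] fun x => x ^ r / a ^ r :=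
    eventually_of_mem (Ioi_mem_nhds ha) fun x (hx : 0 < x) => Real.div_rpow hx.le ha.le r
  rw [hev.iteratedDeriv_eq, iteratedDeriv_div_const, iteratedDeriv_eq_iterate,
    Real.iter_deriv_rpow_const, Real.rpow_sub_natCast ha.ne']
  field_simp

theorem contDiffAt_sqrt_div_mul_add {a b c x : ℝ} (h : 0 < a / (c * (x + b)))
    {n : WithTop ℕ∞} : ContDiffAt ℝ n (fun y => √(a / (c * (y + b)))) x := by
  have hden : c * (x + b) ≠ 0 := by rintro h'; simp [h'] at h
  exact ContDiffAt.sqrt (by fun_prop (disch := exact hden)) h.ne'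

theorem hasDerivAt_sqrt_div_mul_add {a b c x : ℝ} (h : 0 < a / (c * (x + b))) :
    HasDerivAt (fun y => √(a / (c * (y + b)))) (-√(a / (c * (x + b))) / (2 * (x + b))) x := by
  have hc : c ≠ 0 := by rintro rfl; simp at h
  have hx : x + b ≠ 0 := by rintro h'; simp [h'] at h
  have hu := (hasDerivAt_const x a).fun_div (((hasDerivAt_id' x).add_const b).const_mul c)
    (mul_ne_zero hc hx)
  refine (hu.sqrt h.ne').congr_deriv ?_
  have hs : √(a / (c * (x + b))) ≠ 0 := (Real.sqrt_pos.mpr h).ne'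
  have hsq : √(a / (c * (x + b))) ^ 2 = a / (c * (x + b)) := Real.sq_sqrt h.le
  field_simp
  rw [hsq]
  field_simp
  ring

noncomputable def laxRarefaction (γ ρ p σ : ℝ) : ℝ :=
  (2 * √(γ * p / ρ) / (γ - 1)) * ((σ / p) ^ ((γ - 1) / (2 * γ)) - 1)

noncomputable def laxShockFactor (γ ρ p σ : ℝ) : ℝ :=
  √((1 - (γ - 1) / (γ + 1)) / (ρ * (σ + ((γ - 1) / (γ + 1)) * p)))

noncomputable def laxShock (γ ρ p σ : ℝ) : ℝ := (σ - p) * laxShockFactor γ ρ p σ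

variable {γ ρ p : ℝ}

section Rarefaction

theorem laxRarefaction_self (hp : p ≠ 0) : laxRarefaction γ ρ p p = 0 := by
  simp [laxRarefaction, hp]

theorem contDiffAt_laxRarefaction (hp : p ≠ 0) {n : WithTop ℕ∞} :
    ContDiffAt ℝ n (laxRarefaction γ ρ p) p :=
  contDiffAt_const.mul ((contDiffAt_div_rpow_self hp _).sub contDiffAt_const)

theorem iteratedDeriv_laxRarefaction_self (hp : 0 < p) {k : ℕ} (hk : k ≠ 0) :
    iteratedDeriv k (laxRarefaction γ ρ p) p =
      2 * √(γ * p / ρ) / (γ - 1) * (descPochhammer ℝ k).eval ((γ - 1) / (2 * γ)) / p ^ k := by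
  change iteratedDeriv k (fun σ => _ * ((σ / p) ^ _ - 1)) p = _
  rw [iteratedDeriv_const_mul_field,
    iteratedDeriv_fun_sub (contDiffAt_div_rpow_self hp.ne' _) contDiffAt_const,
    iteratedDeriv_const, if_neg hk, sub_zero, iteratedDeriv_div_rpow_self hp]
  ring

theorem iteratedDeriv_one_laxRarefaction_self (hγ : 1 < γ) (hp : 0 < p) :
    iteratedDeriv 1 (laxRarefaction γ ρ p) p = √(γ * p / ρ) / (γ * p) := by
  have hγ1 : γ - 1 ≠ 0 := by linarith
  have hγ0 : γ ≠ 0 := by linarith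
  rw [iteratedDeriv_laxRarefaction_self hp one_ne_zero]
  simp only [descPochhammer_one, Polynomial.eval_X, pow_one]
  field_simp

theorem iteratedDeriv_two_laxRarefaction_self (hγ : 1 < γ) (hp : 0 < p) :
    iteratedDeriv 2 (laxRarefaction γ ρ p) p =
      -((γ + 1) * √(γ * p / ρ)) / (2 * γ ^ 2 * p ^ 2) := by
  have hγ1 : γ - 1 ≠ 0 := by linarith
  have hγ0 : γ ≠ 0 := by linarith
  rw [iteratedDeriv_laxRarefaction_self hp two_ne_zero]
  simp only [descPochhammer_succ_right, descPochhammer_zero, CharP.cast_eq_zero, sub_zero, one_mul,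
    Nat.cast_one, Polynomial.eval_mul, Polynomial.eval_X, Polynomial.eval_sub, Polynomial.eval_one]
  field_simp
  ring

end Rarefaction

section Shock

theorem one_sub_sub_one_div_add_one (hγ : γ + 1 ≠ 0) :
    1 - (γ - 1) / (γ + 1) = 2 / (γ + 1) := by
  field_simp
  ring

theorem add_sub_one_div_add_one_mul (hγ : γ + 1 ≠ 0) (p : ℝ) :
    p + (γ - 1) / (γ + 1) * p = 2 * γ * p / (γ + 1) := by
  field_simp
  ring

theorem laxShockFactor_radicand_pos (hγ : 1 < γ) (hρ : 0 < ρ) (hp : 0 < p) :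
    0 < (1 - (γ - 1) / (γ + 1)) / (ρ * (p + (γ - 1) / (γ + 1) * p)) := by
  have hγ1 : γ + 1 ≠ 0 := by linarith
  have hγ0 : 0 < γ := by linarith
  rw [one_sub_sub_one_div_add_one hγ1, add_sub_one_div_add_one_mul hγ1]
  positivity

theorem laxShockFactor_self (hγ : 1 < γ) (hρ : 0 < ρ) (hp : 0 < p) :
    laxShockFactor γ ρ p p = √(γ * p / ρ) / (γ * p) := by
  have hγp : 0 < γ * p := by positivity
  have hγ1 : γ + 1 ≠ 0 := by linarith
  have harg : 2 / (γ + 1) / (ρ * (2 * γ * p / (γ + 1))) = γ * p / ρ / (γ * p) ^ 2 := by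
    field_simp
  rw [laxShockFactor, one_sub_sub_one_div_add_one hγ1, add_sub_one_div_add_one_mul hγ1, harg,
    Real.sqrt_div' _ (sq_nonneg _), Real.sqrt_sq hγp.le]

theorem contDiffAt_laxShockFactor (hγ : 1 < γ) (hρ : 0 < ρ) (hp : 0 < p) {n : WithTop ℕ∞} :
    ContDiffAt ℝ n (laxShockFactor γ ρ p) p :=
  contDiffAt_sqrt_div_mul_add (laxShockFactor_radicand_pos hγ hρ hp)

theorem hasDerivAt_laxShockFactor_self (hγ : 1 < γ) (hρ : 0 < ρ) (hp : 0 < p) :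
    HasDerivAt (laxShockFactor γ ρ p) (-((γ + 1) * √(γ * p / ρ)) / (4 * γ ^ 2 * p ^ 2)) p := by
  have hγ1 : γ + 1 ≠ 0 := by linarith
  have hγ0 : γ ≠ 0 := by linarith
  refine (hasDerivAt_sqrt_div_mul_add (laxShockFactor_radicand_pos hγ hρ hp)).congr_deriv ?_
  rw [← laxShockFactor, laxShockFactor_self hγ hρ hp, add_sub_one_div_add_one_mul hγ1]
  field_simp
  ring

theorem laxShock_self : laxShock γ ρ p p = 0 := by
  simp [laxShock]

theorem contDiffAt_laxShock (hγ : 1 < γ) (hρ : 0 < ρ) (hp : 0 < p) {n : WithTop ℕ∞} :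
    ContDiffAt ℝ n (laxShock γ ρ p) p :=
  (contDiffAt_id.sub contDiffAt_const).mul (contDiffAt_laxShockFactor hγ hρ hp)

theorem iteratedDeriv_one_laxShock_self (hγ : 1 < γ) (hρ : 0 < ρ) (hp : 0 < p) :
    iteratedDeriv 1 (laxShock γ ρ p) p = √(γ * p / ρ) / (γ * p) := by
  rw [show laxShock γ ρ p = fun σ => (σ - p) * laxShockFactor γ ρ p σ from rfl,
    iteratedDeriv_succ_sub_mul (k := 0) (contDiffAt_laxShockFactor hγ hρ hp)]
  simp [laxShockFactor_self hγ hρ hp]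

theorem iteratedDeriv_two_laxShock_self (hγ : 1 < γ) (hρ : 0 < ρ) (hp : 0 < p) :
    iteratedDeriv 2 (laxShock γ ρ p) p = -((γ + 1) * √(γ * p / ρ)) / (2 * γ ^ 2 * p ^ 2) := by
  rw [show laxShock γ ρ p = fun σ => (σ - p) * laxShockFactor γ ρ p σ from rfl,
    iteratedDeriv_succ_sub_mul (k := 1) (contDiffAt_laxShockFactor hγ hρ hp),
    iteratedDeriv_one, (hasDerivAt_laxShockFactor_self hγ hρ hp).deriv]
  field_simp
  ring

end Shock

/-- `ψ` is twice continuously differentiable at the base pressure `σ = p_k`. -/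
theorem laxPsi_contDiffAt_two
    (γ ρk pk : ℝ) (hγ : 1 < γ) (hρ : 0 < ρk) (hp : 0 < pk) :
    ContDiffAt ℝ 2 (laxPsi γ ρk pk) pk := by
  show ContDiffAt ℝ 2
    (fun σ => if σ ≤ pk then laxRarefaction γ ρk pk σ else laxShock γ ρk pk σ) pk
  refine contDiffAt_ite_le_of_iteratedDeriv_eq (n := 2) (contDiffAt_laxRarefaction hp.ne')
    (contDiffAt_laxShock hγ hρ hp) fun k hk => ?_
  interval_cases k
  · simp [laxRarefaction_self hp.ne', laxShock_self]
  · rw [iteratedDeriv_one_laxRarefaction_self hγ hp, iteratedDeriv_one_laxShock_self hγ hρ hp]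
  · rw [iteratedDeriv_two_laxRarefaction_self hγ hp, iteratedDeriv_two_laxShock_self hγ hρ hp]
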